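/- Let L be a number field and let β₁, …, β₈ ∈ L satisfy: 2β_k ∈ O_L for all k, β_k − β_ℓ ∈ O_L for all k, ℓ (i.e. all β_k have the same class in (½O_L)/O_L), and β₁ + ⋯ + β₈ ∈ 2O_L. Then Σ_σ ( Σ_{k=1}^7 |σ(β_k)|² + |σ(β₈) − 1|² ) ≥ [L:ℚ] and Σ_σ ( Σ_{k=1}^7 |σ(β_k) − 1/3|² + |σ(β₈) + 1/3|² ) ≥ (8/9)·[L:ℚ], where σ ranges over all field embeddings of L into ℂ. -/

import Mathlib

/-!
Write `T₂(x) = ∑_σ |σ x|²`. For a nonzero algebraic integer `x`, AM-GM and `|N(x)| ≥ 1` give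
`T₂(x) ≥ [K:ℚ]`. Scaling `β - v` by 2 (resp. 6) for the vertex `v` makes every coordinate
integral, and the orthogonal decomposition of `ℝ⁸` into the diagonal, the line through
`(1,…,1,-7)` and the mean-zero vectors supported on the first seven coordinates writes the sum to
be bounded as a nonnegative combination of `T₂` of three kinds of algebraic integers: the
coordinate sum, the sum of the differences to the last coordinate, and the pairwise differences
among the first seven coordinates. The congruence conditions on `β` keep enough of them nonzero:
when the first seven coordinates of `β` differ at all, at least twelve ordered pairwise
differences are nonzero, and when they all agree, `β₀ - β₇` lies in `2𝓞_K`, which makes the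
second kind large.
-/

open NumberField Finset

section InnerProduct

variable {ι E : Type*} [NormedAddCommGroup E] [InnerProductSpace ℝ E]

theorem sum_sum_norm_sub_sq (s : Finset ι) (x : ι → E) :
    ∑ k ∈ s, ∑ l ∈ s, ‖x k - x l‖ ^ 2 =
      2 * (#s * ∑ k ∈ s, ‖x k‖ ^ 2 - ‖∑ k ∈ s, x k‖ ^ 2) := by
  simp_rw [norm_sub_sq_real, sum_add_distrib, sum_sub_distrib, sum_const, ← mul_sum,
    ← inner_sum, ← sum_inner, real_inner_self_eq_norm_sq, nsmul_eq_mul, ← mul_sum]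
  ring

/-- The three terms are the squared lengths of the projections of `(x, y)` onto the diagonal,
onto the line through `(1, …, 1, -#s)`, and onto the mean-zero vectors supported on `s`. -/
theorem sum_norm_sq_add_norm_sq_eq (s : Finset ι) (hs : s.Nonempty) (x : ι → E) (y : E) :
    ∑ k ∈ s, ‖x k‖ ^ 2 + ‖y‖ ^ 2 =
      ‖∑ k ∈ s, x k + y‖ ^ 2 / (#s + 1) + ‖∑ k ∈ s, (x k - y)‖ ^ 2 / (#s * (#s + 1)) +
        (∑ k ∈ s, ∑ l ∈ s, ‖x k - x l‖ ^ 2) / (2 * #s) := by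
  have hm : (0 : ℝ) < #s := by exact_mod_cast hs.card_pos
  rw [sum_sum_norm_sub_sq, sum_sub_distrib, sum_const, ← Nat.cast_smul_eq_nsmul ℝ,
    norm_add_sq_real, norm_sub_sq_real, norm_smul, inner_smul_right, Real.norm_natCast]
  field_simp
  ring

end InnerProduct

/-- A class of `f` of size `a` and its complement in `s` already give `2 a (#s - a) ≥ 2 (#s - 1)`
ordered pairs with distinct values. -/
theorem mul_card_sub_one_le_sum_sum_of_ne {ι α : Type*} {s : Finset ι}
    (f : ι → α) {i j : ι} (hi : i ∈ s) (hj : j ∈ s) (hij : f i ≠ f j) (F : ι → ι → ℝ)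
    (hF : ∀ k ∈ s, ∀ l ∈ s, 0 ≤ F k l) {B : ℝ} (hB0 : 0 ≤ B)
    (hB : ∀ k ∈ s, ∀ l ∈ s, f k ≠ f l → B ≤ F k l) :
    2 * (#s - 1) * B ≤ ∑ k ∈ s, ∑ l ∈ s, F k l := by
  classical
  set A := s.filter (f · = f i)
  set A' := s.filter (f · ≠ f i)
  have hcard : (#A : ℝ) + #A' = #s := by exact_mod_cast card_filter_add_card_filter_not _
  have hA : (1 : ℝ) ≤ #A := by
    exact_mod_cast card_pos.mpr ⟨i, mem_filter.mpr (⟨hi, rfl⟩ : i ∈ s ∧ f i = f i)⟩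
  have hA' : (1 : ℝ) ≤ #A' := by exact_mod_cast card_pos.mpr ⟨j, mem_filter.mpr ⟨hj, hij.symm⟩⟩
  have cross : ∀ T ⊆ s, ∀ U ⊆ s, (∀ k ∈ T, ∀ l ∈ U, f k ≠ f l) →
      #T * #U * B ≤ ∑ k ∈ T, ∑ l ∈ s, F k l := by
    intro T hT U hU hTU
    calc (#T * #U * B : ℝ) = ∑ k ∈ T, ∑ l ∈ U, B := by simp [mul_assoc]
      _ ≤ ∑ k ∈ T, ∑ l ∈ U, F k l :=
        sum_le_sum fun k hk => sum_le_sum fun l hl => hB k (hT hk) l (hU hl) (hTU k hk l hl)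
      _ ≤ ∑ k ∈ T, ∑ l ∈ s, F k l :=
        sum_le_sum fun k hk => sum_le_sum_of_subset_of_nonneg hU fun l hl _ => hF k (hT hk) l hl
  have hAA' := cross A (filter_subset _ _) A' (filter_subset _ _) fun k hk l hl h =>
    (mem_filter.mp hl).2 (h ▸ (mem_filter.mp hk).2)
  have hA'A := cross A' (filter_subset _ _) A (filter_subset _ _) fun k hk l hl h =>
    (mem_filter.mp hk).2 (h.symm ▸ (mem_filter.mp hl).2)
  rw [← sum_filter_add_sum_filter_not s (f · = f i)]
  nlinarith [mul_nonneg (mul_nonneg (sub_nonneg.mpr hA) (sub_nonneg.mpr hA')) hB0]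

theorem IsIntegral.intCast_mul_add_ne_zero {F : Type*} [Field F] [CharZero F] {x : F}
    (hx : IsIntegral ℤ x) {a b : ℤ} (hab : ¬ a ∣ b) : (a : F) * x + b ≠ 0 := by
  intro h
  have ha : a ≠ 0 := by
    rintro rfl
    simp only [Int.cast_zero, zero_mul, zero_add, Int.cast_eq_zero] at h
    simp [h] at hab
  have hxq : x = algebraMap ℚ F (-b / a) := by
    rw [map_div₀, map_neg, map_intCast, map_intCast, eq_div_iff (by exact_mod_cast ha)]
    linear_combination h
  rw [hxq, isIntegral_algebraMap_iff (algebraMap ℚ F).injective] at hx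
  obtain ⟨z, hz⟩ := IsIntegrallyClosed.isIntegral_iff.mp hx
  refine hab ⟨-z, ?_⟩
  rw [eq_intCast, eq_div_iff (by exact_mod_cast ha)] at hz
  exact_mod_cast (by linear_combination hz : (b : ℚ) = a * -z)

section CommRing

variable {R : Type*} [CommRing R] {β : Fin 8 → R} {γ : R}

theorem card_erase_seven : #(univ.erase (7 : Fin 8)) = 7 := rfl

theorem sum_erase_seven_eq (hsum : ∑ k, β k = 2 * γ) :
    ∑ k ∈ univ.erase 7, β k = 2 * γ - β 7 := by
  rw [sum_erase_eq_sub (mem_univ _), hsum]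

theorem seven_mul_sub_eq (hsum : ∑ k, β k = 2 * γ) (hconst : ∀ k ∈ univ.erase 7, β k = β 0) :
    7 * (β 0 - β 7) = 2 * γ - 4 * (2 * β 7) := by
  have h := sum_erase_seven_eq hsum
  rw [sum_congr rfl hconst, sum_const, card_erase_seven, nsmul_eq_mul, Nat.cast_ofNat] at h
  linear_combination h

theorem sum_erase_seven_sub_eq (x : Fin 8 → R) (y : R)
    (hconst : ∀ k ∈ univ.erase 7, x k = x 0) :
    ∑ k ∈ univ.erase 7, (x k - y) = 7 * (x 0 - y) := by
  rw [sum_congr rfl fun k hk => by rw [hconst k hk], sum_const, card_erase_seven, nsmul_eq_mul,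
    Nat.cast_ofNat]

theorem exists_isIntegral_sub_eq_two_mul (hu : IsIntegral ℤ (2 * β 7))
    (hdiff : ∀ k l, IsIntegral ℤ (β k - β l)) (hγ : IsIntegral ℤ γ)
    (hsum : ∑ k, β k = 2 * γ) (hconst : ∀ k ∈ univ.erase 7, β k = β 0) :
    ∃ e, IsIntegral ℤ e ∧ β 0 - β 7 = 2 * e :=
  ⟨γ - 2 • (2 * β 7) - 3 • (β 0 - β 7), (hγ.sub (hu.nsmul 2)).sub ((hdiff 0 7).nsmul 3), by
    linear_combination seven_mul_sub_eq hsum hconst⟩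

end CommRing

namespace NumberField

variable {K : Type*} [Field K] [NumberField K]

noncomputable def sumNormSq (x : K) : ℝ := ∑ σ : K →+* ℂ, ‖σ x‖ ^ 2

theorem sumNormSq_nonneg (x : K) : 0 ≤ sumNormSq x := by
  unfold sumNormSq
  positivity

theorem sumNormSq_intCast_mul (m : ℤ) (x : K) :
    sumNormSq ((m : K) * x) = m ^ 2 * sumNormSq x := by
  simp [sumNormSq, mul_sum, mul_pow]

theorem sum_sumNormSq_add_sumNormSq {ι : Type*} (s : Finset ι) (x : ι → K) (y : K) :
    ∑ k ∈ s, sumNormSq (x k) + sumNormSq y =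
      ∑ σ : K →+* ℂ, (∑ k ∈ s, ‖σ (x k)‖ ^ 2 + ‖σ y‖ ^ 2) := by
  rw [sum_add_distrib, sumNormSq, sum_comm]
  rfl

theorem sum_sumNormSq_natCast_mul_add {ι : Type*} (c : ℕ) (s : Finset ι) (x : ι → K) (y : K) :
    ∑ k ∈ s, sumNormSq ((c : K) * x k) + sumNormSq ((c : K) * y) =
      c ^ 2 * ∑ σ : K →+* ℂ, (∑ k ∈ s, ‖σ (x k)‖ ^ 2 + ‖σ y‖ ^ 2) := by
  simp [sum_sumNormSq_add_sumNormSq, mul_sum, mul_pow, mul_add]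

theorem prod_norm_embeddings_eq_abs_norm (x : K) :
    ∏ σ : K →+* ℂ, ‖σ x‖ = |(Algebra.norm ℚ x : ℝ)| := by
  rw [Fintype.prod_equiv (RingHom.equivRatAlgHom K ℂ) (fun σ : K →+* ℂ => ‖σ x‖)
    (fun φ : K →ₐ[ℚ] ℂ => ‖φ x‖) (fun _ => rfl), ← norm_prod,
    ← Algebra.norm_eq_prod_embeddings, eq_ratCast, Complex.norm_ratCast]

theorem one_le_prod_norm_embeddings {x : K} (hx : IsIntegral ℤ x) (h0 : x ≠ 0) :
    1 ≤ ∏ σ : K →+* ℂ, ‖σ x‖ := by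
  obtain ⟨z, hz⟩ := IsIntegrallyClosed.isIntegral_iff.mp (Algebra.isIntegral_norm ℚ hx)
  have hz0 : z ≠ 0 := by
    rintro rfl
    exact h0 (by simpa using hz.symm)
  rw [prod_norm_embeddings_eq_abs_norm, ← hz, eq_intCast, Rat.cast_intCast, ← Int.cast_abs]
  exact_mod_cast Int.one_le_abs hz0

theorem finrank_le_sumNormSq {x : K} (hx : IsIntegral ℤ x) (h0 : x ≠ 0) :
    (Module.finrank ℚ K : ℝ) ≤ sumNormSq x := by
  have hn : (0 : ℝ) < Module.finrank ℚ K := by exact_mod_cast Module.finrank_pos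
  have hcard : (∑ _σ : K →+* ℂ, (1 : ℝ)) = Module.finrank ℚ K := by
    simp [Embeddings.card]
  have amgm := Real.geom_mean_le_arith_mean univ (fun _ => 1) (fun σ : K →+* ℂ => ‖σ x‖ ^ 2)
    (fun _ _ => zero_le_one) (hcard ▸ hn) (fun _ _ => by positivity)
  simp only [Real.rpow_one, one_mul, hcard, prod_pow] at amgm
  rw [le_div_iff₀ hn] at amgm
  have hprod : 1 ≤ (∏ σ : K →+* ℂ, ‖σ x‖) ^ 2 :=
    one_le_pow₀ (one_le_prod_norm_embeddings hx h0)
  exact (le_mul_of_one_le_left hn.le (Real.one_le_rpow hprod (by positivity))).trans amgm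

theorem sq_mul_finrank_le_sumNormSq {x y : K} (hx : IsIntegral ℤ x) (h0 : x ≠ 0) (m : ℤ)
    (hy : y = m * x) : (m : ℝ) ^ 2 * Module.finrank ℚ K ≤ sumNormSq y := by
  rw [hy, sumNormSq_intCast_mul]
  gcongr
  exact finrank_le_sumNormSq hx h0

theorem sq_mul_finrank_le_sumNormSq_of_not_dvd {x y : K} (hx : IsIntegral ℤ x) {a b : ℤ}
    (hab : ¬ a ∣ b) (m : ℤ) (hy : y = m * (a * x + b)) :
    (m : ℝ) ^ 2 * Module.finrank ℚ K ≤ sumNormSq y :=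
  sq_mul_finrank_le_sumNormSq (((isIntegral_intCast a).mul hx).add (isIntegral_intCast b))
    (hx.intCast_mul_add_ne_zero hab) m hy

theorem sum_sumNormSq_add_sumNormSq_eq {ι : Type*} (s : Finset ι) (hs : s.Nonempty)
    (x : ι → K) (y : K) :
    ∑ k ∈ s, sumNormSq (x k) + sumNormSq y =
      sumNormSq (∑ k ∈ s, x k + y) / (#s + 1) +
        sumNormSq (∑ k ∈ s, (x k - y)) / (#s * (#s + 1)) +
          (∑ k ∈ s, ∑ l ∈ s, sumNormSq (x k - x l)) / (2 * #s) := by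
  rw [sum_sumNormSq_add_sumNormSq]
  calc ∑ σ : K →+* ℂ, (∑ k ∈ s, ‖σ (x k)‖ ^ 2 + ‖σ y‖ ^ 2)
    _ = _ := sum_congr rfl fun σ _ => sum_norm_sq_add_norm_sq_eq s hs _ _
    _ = _ := by
        simp only [sumNormSq, map_add, map_sub, map_sum, sum_add_distrib, ← sum_div]
        rw [sum_comm (s := univ)]
        simp_rw [sum_comm (s := univ)]

theorem sum_sumNormSq_add_sumNormSq_eq_of_fin_eight (x : Fin 8 → K) (y : K) :
    ∑ k ∈ univ.erase 7, sumNormSq (x k) + sumNormSq y =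
      sumNormSq (∑ k ∈ univ.erase 7, x k + y) / 8 +
        sumNormSq (∑ k ∈ univ.erase 7, (x k - y)) / 56 +
          (∑ k ∈ univ.erase 7, ∑ l ∈ univ.erase 7, sumNormSq (x k - x l)) / 14 := by
  rw [sum_sumNormSq_add_sumNormSq_eq _ ⟨0, by decide⟩, card_erase_seven]
  norm_num

section E8

variable {β : Fin 8 → K} {γ : K}

theorem four_mul_finrank_le_vertexOne (hu : IsIntegral ℤ (2 * β 7))
    (hdiff : ∀ k l, IsIntegral ℤ (β k - β l)) (hγ : IsIntegral ℤ γ)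
    (hsum : ∑ k, β k = 2 * γ) :
    4 * Module.finrank ℚ K ≤
      ∑ k ∈ univ.erase 7, sumNormSq (2 * β k) + sumNormSq (2 * (β 7 - 1)) := by
  have hS := sum_erase_seven_eq hsum
  rw [sum_sumNormSq_add_sumNormSq_eq_of_fin_eight]
  have hA := sq_mul_finrank_le_sumNormSq_of_not_dvd hγ (a := 2) (b := -1) (by decide) 2
    (y := ∑ k ∈ univ.erase 7, 2 * β k + 2 * (β 7 - 1)) (by
      rw [← mul_sum, hS]; push_cast; ring)
  simp only [Int.cast_ofNat] at hA
  by_cases hconst : ∀ k ∈ univ.erase 7, β k = β 0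
  · have hC0 : 0 ≤ ∑ k ∈ univ.erase 7, ∑ l ∈ univ.erase 7, sumNormSq (2 * β k - 2 * β l) :=
      sum_nonneg fun _ _ => sum_nonneg fun _ _ => sumNormSq_nonneg _
    obtain ⟨e, he, hde⟩ := exists_isIntegral_sub_eq_two_mul hu hdiff hγ hsum hconst
    have hB := sq_mul_finrank_le_sumNormSq_of_not_dvd he (a := 2) (b := 1) (by decide) 14
      (y := ∑ k ∈ univ.erase 7, (2 * β k - 2 * (β 7 - 1))) (by
        rw [sum_erase_seven_sub_eq (fun k => 2 * β k) _ fun k hk => by rw [hconst k hk]]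
        push_cast
        linear_combination 14 * hde)
    simp only [Int.cast_ofNat] at hB
    linarith
  · obtain ⟨i, hi, hne⟩ := not_forall₂.mp hconst
    have hB := sq_mul_finrank_le_sumNormSq_of_not_dvd (hγ.sub (hu.nsmul 2)) (a := 2) (b := 7)
      (by decide) 2 (y := ∑ k ∈ univ.erase 7, (2 * β k - 2 * (β 7 - 1))) (by
        rw [sum_sub_distrib, ← mul_sum, hS, sum_const, card_erase_seven]
        push_cast
        ring)
    have hpair : ∀ k ∈ univ.erase 7, ∀ l ∈ univ.erase 7, β k ≠ β l →
        (2 : ℝ) ^ 2 * Module.finrank ℚ K ≤ sumNormSq (2 * β k - 2 * β l) := fun k _ l _ h => by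
      exact_mod_cast sq_mul_finrank_le_sumNormSq (hdiff k l) (sub_ne_zero.mpr h) 2
        (by push_cast; ring)
    have hC := mul_card_sub_one_le_sum_sum_of_ne β hi (by decide) hne
      (fun k l => sumNormSq (2 * β k - 2 * β l)) (fun _ _ _ _ => sumNormSq_nonneg _)
      (by positivity) hpair
    rw [card_erase_seven, Nat.cast_ofNat] at hC
    simp only [Int.cast_ofNat] at hB
    linarith

theorem thirtyTwo_mul_finrank_le_vertexTwo (hu : IsIntegral ℤ (2 * β 7))
    (hdiff : ∀ k l, IsIntegral ℤ (β k - β l)) (hγ : IsIntegral ℤ γ)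
    (hsum : ∑ k, β k = 2 * γ) :
    32 * Module.finrank ℚ K ≤
      ∑ k ∈ univ.erase 7, sumNormSq (6 * (β k - 1 / 3)) + sumNormSq (6 * (β 7 + 1 / 3)) := by
  have hS := sum_erase_seven_eq hsum
  rw [sum_sumNormSq_add_sumNormSq_eq_of_fin_eight]
  set y := 6 * (β 7 + 1 / 3)
  have hA0 := sumNormSq_nonneg (∑ k ∈ univ.erase 7, 6 * (β k - 1 / 3) + y)
  have hB0 := sumNormSq_nonneg (∑ k ∈ univ.erase 7, (6 * (β k - 1 / 3) - y))
  have hA : γ ≠ 1 → 12 ^ 2 * (Module.finrank ℚ K : ℝ) ≤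
      sumNormSq (∑ k ∈ univ.erase 7, 6 * (β k - 1 / 3) + y) := fun hγ1 => by
    exact_mod_cast sq_mul_finrank_le_sumNormSq (hγ.sub isIntegral_one) (sub_ne_zero.mpr hγ1) 12
      (by rw [← mul_sum, sum_sub_distrib, hS, sum_const, card_erase_seven]; push_cast; ring)
  by_cases hconst : ∀ k ∈ univ.erase 7, β k = β 0
  · have hC0 : 0 ≤ ∑ k ∈ univ.erase 7, ∑ l ∈ univ.erase 7,
        sumNormSq (6 * (β k - 1 / 3) - 6 * (β l - 1 / 3)) :=
      sum_nonneg fun _ _ => sum_nonneg fun _ _ => sumNormSq_nonneg _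
    have h7 := seven_mul_sub_eq hsum hconst
    obtain ⟨e, he, hde⟩ := exists_isIntegral_sub_eq_two_mul hu hdiff hγ hsum hconst
    have hB : ∑ k ∈ univ.erase 7, (6 * (β k - 1 / 3) - y) = 28 * (3 * e - 1) := by
      rw [sum_erase_seven_sub_eq (fun k => 6 * (β k - 1 / 3)) _ fun k hk => by rw [hconst k hk]]
      linear_combination 42 * hde
    by_cases hγ1 : γ = 1
    · -- `γ = 1` forces `7 e + 2 (2 β₇) = 1`, hence `28 (3 e - 1) = 56 (-3 (2 β₇ + 3 e) + 1)`.
      have hB' := sq_mul_finrank_le_sumNormSq_of_not_dvd (hu.add (he.nsmul 3)) (a := -3)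
        (b := 1) (by decide) 56 (y := ∑ k ∈ univ.erase 7, (6 * (β k - 1 / 3) - y)) (by
          rw [hB]; push_cast; linear_combination 42 * h7 - 294 * hde + 84 * hγ1)
      simp only [Int.cast_ofNat] at hB'
      linarith
    · have hB' := sq_mul_finrank_le_sumNormSq_of_not_dvd he (a := 3) (b := -1) (by decide) 28
        (y := ∑ k ∈ univ.erase 7, (6 * (β k - 1 / 3) - y)) (by rw [hB]; push_cast; ring)
      simp only [Int.cast_ofNat] at hB'
      linarith [hA hγ1]
  · obtain ⟨i, hi, hne⟩ := not_forall₂.mp hconst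
    have hpair : ∀ k ∈ univ.erase 7, ∀ l ∈ univ.erase 7, β k ≠ β l →
        (6 : ℝ) ^ 2 * Module.finrank ℚ K ≤ sumNormSq (6 * (β k - 1 / 3) - 6 * (β l - 1 / 3)) :=
      fun k _ l _ h => by
        exact_mod_cast sq_mul_finrank_le_sumNormSq (hdiff k l) (sub_ne_zero.mpr h) 6
          (by push_cast; ring)
    have hC := mul_card_sub_one_le_sum_sum_of_ne β hi (by decide) hne
      (fun k l => sumNormSq (6 * (β k - 1 / 3) - 6 * (β l - 1 / 3)))
      (fun _ _ _ _ => sumNormSq_nonneg _) (by positivity) hpair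
    rw [card_erase_seven, Nat.cast_ofNat] at hC
    by_cases hγ1 : γ = 1
    · have hB := sq_mul_finrank_le_sumNormSq_of_not_dvd hu (a := 3) (b := 2) (by decide) (-8)
        (y := ∑ k ∈ univ.erase 7, (6 * (β k - 1 / 3) - y)) (by
          rw [sum_sub_distrib, ← mul_sum, sum_sub_distrib, hS, sum_const, sum_const,
            card_erase_seven]
          push_cast
          linear_combination 12 * hγ1)
      simp only [Int.cast_neg, Int.cast_ofNat] at hB
      linarith
    · linarith [hA hγ1]

end E8

end NumberField

/-- Lemma 5.15 (the condition P(L/ℚ, E₈) at the vertices of the Voronoi cell of E₈):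
for `β₁, …, β₈ ∈ ½𝓞_L`, all with the same class in `(½𝓞_L)/𝓞_L`, whose sum lies in `2𝓞_L`:
`Σ_σ (Σ_{k=1}^7 |σ(β_k)|² + |σ(β₈) − 1|²) ≥ [L:ℚ]` and
`Σ_σ (Σ_{k=1}^7 |σ(β_k) − 1/3|² + |σ(β₈) + 1/3|²) ≥ (8/9)[L:ℚ]`. -/
theorem statement6 (L : Type*) [Field L] [NumberField L] (β : Fin 8 → L)
    (h2 : ∀ k, IsIntegral ℤ (2 * β k))
    (hdiff : ∀ k l, IsIntegral ℤ (β k - β l))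
    (hsum : ∃ γ : L, IsIntegral ℤ γ ∧ ∑ k, β k = 2 * γ) :
    ((Module.finrank ℚ L : ℝ) ≤
        ∑ σ : L →+* ℂ,
          ((∑ k ∈ Finset.univ.filter (fun k : Fin 8 => k ≠ 7),
              ‖σ (β k)‖ ^ 2) +
            ‖σ (β 7) - 1‖ ^ 2)) ∧
      ((8 / 9 : ℝ) * (Module.finrank ℚ L : ℝ) ≤
        ∑ σ : L →+* ℂ,
          ((∑ k ∈ Finset.univ.filter (fun k : Fin 8 => k ≠ 7),
              ‖σ (β k) - 1 / 3‖ ^ 2) +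
            ‖σ (β 7) + 1 / 3‖ ^ 2)) := by
  obtain ⟨γ, hγ, hsum⟩ := hsum
  have h₁ := four_mul_finrank_le_vertexOne (h2 7) hdiff hγ hsum
  have h₂ := thirtyTwo_mul_finrank_le_vertexTwo (h2 7) hdiff hγ hsum
  rw [← Nat.cast_ofNat (R := L) (n := 2), sum_sumNormSq_natCast_mul_add] at h₁
  rw [← Nat.cast_ofNat (R := L) (n := 6), sum_sumNormSq_natCast_mul_add] at h₂
  simp only [filter_ne', map_sub, map_add, map_one, map_div₀, map_ofNat, Nat.cast_ofNat] at h₁ h₂ ⊢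
  constructor <;> linarith
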